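/- Suppose 𝒜 = {0, 1, …, ε} ∪ {p₁, …, p_l} ∪ {α − 1, α}, where ε ≥ 1 and ε + 2 ≤ p₁ < ⋯ < p_l ≤ α − ε, and assume moreover that {α − ε, …, α} ⊆ 𝒜 and that p₁ − ε − 1 = λ(𝒜). Then reg(𝒜) = r(𝒜) = ⌊(λ(𝒜) − 1)/ε⌋ + 2, where r(𝒜) := min{r ∈ ℕ : (r+1)𝒜 = {0, α} + r𝒜} and reg(𝒜) := min{m ≥ 1 : m𝒜 is full}. -/

import Mathlib

/-! Let `p = ε + 1 + λ` be the least element of `𝒜` above `ε` and `R = ⌊(λ - 1)/ε⌋ + 2`.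
Every element of `m𝒜` below `p` is at most `mε`, and `mε + 1 < p` for `m < R`, so `m𝒜` is not
full. Conversely, write `n ≤ Rα` as `uα + v` with `v < α`; if `v` lies in a gap `(a, a')` of
`𝒜`, of length at most `λ`, then `n` is reached within `R` summands either from `a` by adding
elements of `{0, …, ε}` or from `a'` by using elements of `{α - ε, …, α}`. Finally, once
`(r + 1)𝒜 = {0, α} + r𝒜`, the elements of `R𝒜` below `α` already lie in `r𝒜`, which fails for
`rε + 1` when `r < R`. -/

open scoped Pointwise

/-- The `m`-fold sumset of a finite set `A ⊆ ℕ`, with `0 • A = {0}`. -/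
def sumset (A : Finset ℕ) : ℕ → Finset ℕ
  | 0 => {0}
  | m + 1 => sumset A m + A

/-- A subset of `ℕ` is full iff it equals `{0, 1, …, n}` for some `n`. -/
def IsFull (B : Finset ℕ) : Prop := ∃ n : ℕ, B = Finset.Iic n

/-- `{i, …, j}` is a gap of `B`: disjoint from `B`, with `i - 1 ∈ B` and `j + 1 ∈ B`. -/
def IsGap (B : Finset ℕ) (i j : ℕ) : Prop :=
  1 ≤ i ∧ i ≤ j ∧ (∀ k, i ≤ k → k ≤ j → k ∉ B) ∧ i - 1 ∈ B ∧ j + 1 ∈ B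

/-- `λ(B)`: the maximal length of a gap of `B` (`0` if there are no gaps). -/
noncomputable def gapLen (B : Finset ℕ) : ℕ :=
  sSup {n | ∃ i j, IsGap B i j ∧ n = j - i + 1}

/-- Property `(P₁)`. -/
def P1 (A : Finset ℕ) (α : ℕ) : Prop :=
  ∀ m : ℕ, ¬ IsFull (sumset A m) → ¬ IsFull (sumset A m + ({0, α} : Finset ℕ))

/-- Property `(P₂)`. -/
def P2 (A : Finset ℕ) (α : ℕ) : Prop :=
  ∀ m : ℕ, ¬ IsFull (sumset A m) →
    ¬ ((∀ k, k ≤ α → k ∈ sumset A m) ∧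
       (∀ k, (m - 1) * α ≤ k → k ≤ m * α → k ∈ sumset A m))

/-- The combinatorial reduction number `r(𝒜)`. -/
noncomputable def rA (A : Finset ℕ) (α : ℕ) : ℕ :=
  sInf {r : ℕ | sumset A (r + 1) = ({0, α} : Finset ℕ) + sumset A r}

/-- The combinatorial regularity `reg(𝒜)`. -/
noncomputable def regA (A : Finset ℕ) : ℕ :=
  sInf {m : ℕ | 1 ≤ m ∧ IsFull (sumset A m)}

section Sumset

variable {A : Finset ℕ}

lemma sumset_zero : sumset A 0 = {0} := rfl

lemma sumset_succ (m : ℕ) : sumset A (m + 1) = sumset A m + A := rfl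

lemma sumset_one : sumset A 1 = A := zero_add A

lemma mem_sumset_one {a : ℕ} (ha : a ∈ A) : a ∈ sumset A 1 := by rwa [sumset_one]

lemma sumset_add (m n : ℕ) : sumset A (m + n) = sumset A m + sumset A n := by
  induction n with
  | zero => exact (add_zero _).symm
  | succ n ih => rw [← add_assoc, sumset_succ, ih, sumset_succ, add_assoc]

lemma add_mem_sumset {m n x y : ℕ} (hx : x ∈ sumset A m) (hy : y ∈ sumset A n) :
    x + y ∈ sumset A (m + n) :=
  sumset_add m n ▸ Finset.add_mem_add hx hy

lemma zero_mem_sumset (h0 : 0 ∈ A) (m : ℕ) : 0 ∈ sumset A m := by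
  induction m with
  | zero => exact Finset.mem_singleton_self 0
  | succ m ih => exact add_mem_sumset ih (mem_sumset_one h0)

lemma sumset_mono (h0 : 0 ∈ A) {m n : ℕ} (h : m ≤ n) : sumset A m ⊆ sumset A n := by
  intro x hx
  obtain ⟨k, rfl⟩ := Nat.exists_eq_add_of_le h
  simpa using add_mem_sumset hx (zero_mem_sumset h0 k)

lemma mul_mem_sumset {a : ℕ} (ha : a ∈ A) (m : ℕ) : m * a ∈ sumset A m := by
  induction m with
  | zero => simp [sumset_zero]
  | succ m ih => simpa [Nat.succ_mul] using add_mem_sumset ih (mem_sumset_one ha)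

lemma le_mul_of_mem_sumset {α : ℕ} (hmax : ∀ a ∈ A, a ≤ α) {m x : ℕ}
    (hx : x ∈ sumset A m) : x ≤ m * α := by
  induction m generalizing x with
  | zero => simp_all [sumset_zero]
  | succ m ih =>
    obtain ⟨y, hy, a, ha, rfl⟩ := Finset.mem_add.mp hx
    have := ih hy
    have := hmax a ha
    rw [Nat.succ_mul]
    omega

lemma le_mul_of_mem_sumset_of_lt {ε p : ℕ} (hsmall : ∀ a ∈ A, a < p → a ≤ ε) {m x : ℕ}
    (hx : x ∈ sumset A m) (hxp : x < p) : x ≤ m * ε := by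
  induction m generalizing x with
  | zero => simp_all [sumset_zero]
  | succ m ih =>
    obtain ⟨y, hy, a, ha, rfl⟩ := Finset.mem_add.mp hx
    have := ih hy (by omega)
    have := hsmall a ha (by omega)
    rw [Nat.succ_mul]
    omega

lemma mul_add_mem_sumset {ε c : ℕ} (h : ∀ t ≤ ε, c + t ∈ A) {m t : ℕ} (ht : t ≤ m * ε) :
    m * c + t ∈ sumset A m := by
  induction m generalizing t with
  | zero => simp_all [sumset_zero]
  | succ m ih =>
    have hsplit : (m + 1) * c + t = (m * c + (t - min t ε)) + (c + min t ε) := by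
      rw [Nat.succ_mul]; omega
    rw [hsplit]
    refine add_mem_sumset (ih ?_) (mem_sumset_one (h _ (min_le_right t ε)))
    rw [Nat.succ_mul] at ht
    omega

end Sumset

lemma le_gapLen {B : Finset ℕ} {i j : ℕ} (h : IsGap B i j) : j - i + 1 ≤ gapLen B := by
  refine le_csSup ⟨B.sup id, ?_⟩ ⟨i, j, h, rfl⟩
  rintro n ⟨i, j, hg, rfl⟩
  have := Finset.le_sup (f := id) hg.2.2.2.2
  simp only [id] at this
  omega

lemma exists_isGap_of_not_mem {B : Finset ℕ} {b c v : ℕ} (hb : b ∈ B) (hbv : b < v)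
    (hc : c ∈ B) (hvc : v < c) (hv : v ∉ B) :
    ∃ a ∈ B, ∃ a' ∈ B, a < v ∧ v < a' ∧ IsGap B (a + 1) (a' - 1) := by
  have hlo : (B.filter (· < v)).Nonempty := ⟨b, Finset.mem_filter.mpr ⟨hb, hbv⟩⟩
  have hhi : (B.filter (v < ·)).Nonempty := ⟨c, Finset.mem_filter.mpr ⟨hc, hvc⟩⟩
  obtain ⟨haB, hav⟩ := Finset.mem_filter.mp ((B.filter (· < v)).max'_mem hlo)
  obtain ⟨ha'B, hva'⟩ := Finset.mem_filter.mp ((B.filter (v < ·)).min'_mem hhi)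
  set a := (B.filter (· < v)).max' hlo
  set a' := (B.filter (v < ·)).min' hhi
  refine ⟨a, haB, a', ha'B, hav, hva', by omega, by omega, fun k hk hk' hkB => ?_, haB,
    by rwa [Nat.sub_add_cancel (by omega)]⟩
  rcases lt_trichotomy k v with hkv | rfl | hvk
  · have := (B.filter (· < v)).le_max' k (Finset.mem_filter.mpr ⟨hkB, hkv⟩)
    omega
  · exact hv hkB
  · have := (B.filter (v < ·)).min'_le k (Finset.mem_filter.mpr ⟨hkB, hvk⟩)
    omega

section Regularity

variable {A : Finset ℕ} {ε α : ℕ}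

/-- With `k = ⌈(v - a)/ε⌉` and `k' = ⌈(a' - v)/ε⌉` we have `k + k' ≤ ⌊(λ - 1)/ε⌋ + 2 ≤ m`, so
either `u + 1 + k ≤ m` (go up from `a`) or `k' ≤ u` (go down from `u * α + a'`). -/
lemma mul_add_mem_sumset_of_gap (hε : 0 < ε) (hεα : ε ≤ α) (hlow : ∀ t ≤ ε, t ∈ A)
    (hhigh : ∀ t ≤ ε, α - ε + t ∈ A) {a a' u v m : ℕ} (ha : a ∈ A) (ha' : a' ∈ A)
    (hav : a < v) (hva' : v < a') (hgap : a' - a ≤ gapLen A + 1) (hu : u < m)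
    (hm : (gapLen A - 1) / ε + 2 ≤ m) :
    u * α + v ∈ sumset A m := by
  have h0 : 0 ∈ A := hlow 0 (Nat.zero_le ε)
  have hα : α ∈ A := by simpa [Nat.sub_add_cancel hεα] using hhigh ε le_rfl
  set k := (v - a - 1) / ε + 1
  set k' := (a' - v - 1) / ε + 1
  have hk : v - a ≤ k * ε := by
    have := Nat.lt_div_mul_add (a := v - a - 1) hε; rw [Nat.succ_mul]; omega
  have hk' : a' - v ≤ k' * ε := by
    have := Nat.lt_div_mul_add (a := a' - v - 1) hε; rw [Nat.succ_mul]; omega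
  have hkk' : k + k' ≤ m := by
    have := Nat.div_add_div_le_add_div (x := v - a - 1) (y := a' - v - 1) (z := ε)
    have := Nat.div_le_div_right (c := ε) (show v - a - 1 + (a' - v - 1) ≤ gapLen A - 1 by omega)
    omega
  by_cases hbelow : u + 1 + k ≤ m
  · have hρ : k * 0 + (v - a) ∈ sumset A k := mul_add_mem_sumset (by simpa using hlow) hk
    have hsum := add_mem_sumset (add_mem_sumset (mul_mem_sumset hα u) (mem_sumset_one ha)) hρ
    rw [show u * α + a + (k * 0 + (v - a)) = u * α + v by omega] at hsum
    exact sumset_mono h0 hbelow hsum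
  · have hρ' : k' * (α - ε) + (k' * ε - (a' - v)) ∈ sumset A k' :=
      mul_add_mem_sumset hhigh (Nat.sub_le _ _)
    have hsum := add_mem_sumset (add_mem_sumset (mul_mem_sumset hα (u - k')) hρ')
      (mem_sumset_one ha')
    have h1 : (u - k') * α + k' * α = u * α := by rw [← Nat.add_mul, Nat.sub_add_cancel (by omega)]
    have h2 : k' * (α - ε) + k' * ε = k' * α := by rw [← Nat.mul_add, Nat.sub_add_cancel hεα]
    rw [show (u - k') * α + (k' * (α - ε) + (k' * ε - (a' - v))) + a' = u * α + v by omega,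
      show u - k' + k' + 1 = u + 1 by omega] at hsum
    exact sumset_mono h0 hu hsum

lemma mem_sumset_of_le (hε : 0 < ε) (hεα : ε ≤ α) (hlow : ∀ t ≤ ε, t ∈ A)
    (hhigh : ∀ t ≤ ε, α - ε + t ∈ A) {m n : ℕ} (hm : (gapLen A - 1) / ε + 2 ≤ m)
    (hn : n ≤ m * α) : n ∈ sumset A m := by
  have h0 : 0 ∈ A := hlow 0 (Nat.zero_le ε)
  have hα : α ∈ A := by simpa [Nat.sub_add_cancel hεα] using hhigh ε le_rfl
  rcases hn.eq_or_lt with rfl | hn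
  · exact mul_mem_sumset hα m
  have hα0 : 0 < α := hε.trans_le hεα
  have hu : n / α < m := (Nat.div_lt_iff_lt_mul hα0).mpr hn
  have hvα : n % α < α := Nat.mod_lt n hα0
  rw [← Nat.div_add_mod' n α]
  by_cases hv : n % α ∈ A
  · exact sumset_mono h0 hu (add_mem_sumset (mul_mem_sumset hα _) (mem_sumset_one hv))
  have hv0 : 0 < n % α := Nat.pos_of_ne_zero fun h => hv (h ▸ h0)
  obtain ⟨a, ha, a', ha', hav, hva', hgap⟩ := exists_isGap_of_not_mem h0 hv0 hα hvα hv
  have := le_gapLen hgap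
  exact mul_add_mem_sumset_of_gap hε hεα hlow hhigh ha ha' hav hva' (by omega) hu hm

lemma sumset_eq_Iic (hε : 0 < ε) (hεα : ε ≤ α) (hlow : ∀ t ≤ ε, t ∈ A)
    (hhigh : ∀ t ≤ ε, α - ε + t ∈ A) (hmax : ∀ a ∈ A, a ≤ α) {m : ℕ}
    (hm : (gapLen A - 1) / ε + 2 ≤ m) : sumset A m = Finset.Iic (m * α) := by
  ext n
  exact ⟨fun h => Finset.mem_Iic.mpr (le_mul_of_mem_sumset hmax h),
    fun h => mem_sumset_of_le hε hεα hlow hhigh hm (Finset.mem_Iic.mp h)⟩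

lemma mul_lt_add_of_lt_div_add_two {l m : ℕ} (hl : 0 < l) (hm : m < (l - 1) / ε + 2) :
    m * ε < ε + l := by
  have : m * ε ≤ (l - 1) / ε * ε + ε := by
    rw [← Nat.succ_mul]; exact Nat.mul_le_mul_right ε (by omega)
  have := Nat.div_mul_le_self (l - 1) ε
  omega

lemma mul_add_one_not_mem_sumset (hsmall : ∀ a ∈ A, a < ε + 1 + gapLen A → a ≤ ε)
    (hgap : 0 < gapLen A) {m : ℕ} (hm : m < (gapLen A - 1) / ε + 2) :
    m * ε + 1 ∉ sumset A m := fun h => by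
  have := mul_lt_add_of_lt_div_add_two hgap hm
  have := le_mul_of_mem_sumset_of_lt hsmall h (by omega)
  omega

lemma sumset_succ_eq_pair_add (h0 : 0 ∈ A) (hα : α ∈ A) (hmax : ∀ a ∈ A, a ≤ α) {m : ℕ}
    (hm : 1 ≤ m) (hfull : sumset A m = Finset.Iic (m * α)) :
    sumset A (m + 1) = {0, α} + sumset A m := by
  refine subset_antisymm (fun x hx => ?_) ?_
  · have hx := le_mul_of_mem_sumset hmax hx
    have : α ≤ m * α := Nat.le_mul_of_pos_left α hm
    rw [Nat.succ_mul] at hx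
    rw [Finset.mem_add, hfull]
    rcases le_or_gt x (m * α) with h | h
    · exact ⟨0, by simp, x, Finset.mem_Iic.mpr h, zero_add x⟩
    · exact ⟨α, by simp, x - α, Finset.mem_Iic.mpr (by omega), by omega⟩
  · rw [sumset_succ, add_comm]
    exact Finset.add_subset_add subset_rfl (by simp [Finset.insert_subset_iff, h0, hα])

/-- If `(r + 1)A = {0, α} + rA`, then every `(r + k)A` is `{0, α, …, kα} + rA`, whose elements
below `α` all lie in `rA`. -/
lemma mem_sumset_of_reduction {r : ℕ} (h : sumset A (r + 1) = {0, α} + sumset A r)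
    {k x : ℕ} (hx : x ∈ sumset A (r + k)) (hxα : x < α) : x ∈ sumset A r := by
  induction k generalizing x with
  | zero => exact hx
  | succ k ih =>
    rw [← add_assoc, add_right_comm, sumset_add, h, add_assoc, ← sumset_add,
      Finset.mem_add] at hx
    obtain ⟨b, hb, y, hy, rfl⟩ := hx
    rcases Finset.mem_insert.mp hb with rfl | hb
    · exact (zero_add y).symm ▸ ih hy (by omega)
    · rw [Finset.mem_singleton.mp hb] at hxα
      omega

lemma regA_eq (hε : 0 < ε) (hεα : ε < α) (hlow : ∀ t ≤ ε, t ∈ A)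
    (hhigh : ∀ t ≤ ε, α - ε + t ∈ A) (hmax : ∀ a ∈ A, a ≤ α)
    (hsmall : ∀ a ∈ A, a < ε + 1 + gapLen A → a ≤ ε) (hgap : 0 < gapLen A) :
    regA A = (gapLen A - 1) / ε + 2 := by
  have hα : α ∈ A := by simpa [Nat.sub_add_cancel hεα.le] using hhigh ε le_rfl
  have hR : (gapLen A - 1) / ε + 2 ∈ {m | 1 ≤ m ∧ IsFull (sumset A m)} :=
    ⟨Nat.succ_pos _, _, sumset_eq_Iic hε hεα.le hlow hhigh hmax le_rfl⟩
  refine le_antisymm (Nat.sInf_le hR) (le_csInf ⟨_, hR⟩ fun m ⟨hm1, n, hn⟩ => ?_)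
  by_contra! hm
  have hmα : m * α ≤ n := Finset.mem_Iic.mp (hn ▸ mul_mem_sumset hα m)
  have : m * (ε + 1) ≤ m * α := Nat.mul_le_mul_left m hεα
  rw [Nat.mul_succ] at this
  exact mul_add_one_not_mem_sumset hsmall hgap hm (hn ▸ Finset.mem_Iic.mpr (by omega))

lemma rA_eq (hε : 0 < ε) (hεα : ε < α) (hlow : ∀ t ≤ ε, t ∈ A)
    (hhigh : ∀ t ≤ ε, α - ε + t ∈ A) (hmax : ∀ a ∈ A, a ≤ α)
    (hsmall : ∀ a ∈ A, a < ε + 1 + gapLen A → a ≤ ε) (hgap : 0 < gapLen A) :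
    rA A α = (gapLen A - 1) / ε + 2 := by
  set R := (gapLen A - 1) / ε + 2
  have h0 : 0 ∈ A := hlow 0 (Nat.zero_le ε)
  have hα : α ∈ A := by simpa [Nat.sub_add_cancel hεα.le] using hhigh ε le_rfl
  have hfull : sumset A R = Finset.Iic (R * α) := sumset_eq_Iic hε hεα.le hlow hhigh hmax le_rfl
  have hR : R ∈ {r | sumset A (r + 1) = {0, α} + sumset A r} :=
    sumset_succ_eq_pair_add h0 hα hmax (Nat.succ_pos _) hfull
  refine le_antisymm (Nat.sInf_le hR) (le_csInf ⟨_, hR⟩ fun r hr => ?_)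
  by_contra! hrR
  have hpα : ε + 1 + gapLen A ≤ α := by
    by_contra! h
    have := hsmall α hα h
    omega
  have := mul_lt_add_of_lt_div_add_two hgap hrR
  have hrα : r * ε ≤ r * α := Nat.mul_le_mul_left r hεα.le
  have hRα : (r + 1) * α ≤ R * α := Nat.mul_le_mul_right α hrR
  have hx : r * ε + 1 ∈ sumset A (r + (R - r)) := by
    rw [Nat.add_sub_cancel' hrR.le, hfull, Finset.mem_Iic]
    rw [Nat.succ_mul] at hRα
    omega
  exact mul_add_one_not_mem_sumset hsmall hgap hrR (mem_sumset_of_reduction hr hx (by omega))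

end Regularity

/-- If `𝒜 = {0,…,ε} ∪ {p₁,…,p_l} ∪ {α−1, α}` with `ε ≥ 1`,
`ε + 2 ≤ p₁ < ⋯ < p_l ≤ α − ε`, `{α−ε,…,α} ⊆ 𝒜` and `p₁ − ε − 1 = λ(𝒜)`, then
`reg(𝒜) = r(𝒜) = ⌊(λ(𝒜) − 1)/ε⌋ + 2`. -/
theorem stmt_19 (𝒜 P : Finset ℕ) (ε α : ℕ) (hPne : P.Nonempty) (hε : 1 ≤ ε)
    (h𝒜 : 𝒜 = Finset.Iic ε ∪ P ∪ {α - 1, α})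
    (hP : ∀ q ∈ P, ε + 2 ≤ q ∧ q ≤ α - ε)
    (htail : ∀ k, α - ε ≤ k → k ≤ α → k ∈ 𝒜)
    (hlam : P.min' hPne - ε - 1 = gapLen 𝒜) :
    regA 𝒜 = rA 𝒜 α ∧ rA 𝒜 α = (gapLen 𝒜 - 1) / ε + 2 := by
  obtain ⟨hp, hpα⟩ := hP _ (P.min'_mem hPne)
  have hlow : ∀ t ≤ ε, t ∈ 𝒜 := fun t ht => by simp [h𝒜, ht]
  have hhigh : ∀ t ≤ ε, α - ε + t ∈ 𝒜 := fun t ht => htail _ (by omega) (by omega)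
  have hmax : ∀ a ∈ 𝒜, a ≤ α := fun a ha => by
    simp only [h𝒜, Finset.mem_union, Finset.mem_Iic, Finset.mem_insert,
      Finset.mem_singleton] at ha
    rcases ha with (ha | ha) | rfl | rfl
    · omega
    · have := (hP a ha).2; omega
    all_goals omega
  have hsmall : ∀ a ∈ 𝒜, a < ε + 1 + gapLen 𝒜 → a ≤ ε := fun a ha hap => by
    simp only [h𝒜, Finset.mem_union, Finset.mem_Iic, Finset.mem_insert,
      Finset.mem_singleton] at ha
    rcases ha with (ha | ha) | rfl | rfl
    · exact ha
    · have := P.min'_le a ha; omega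
    all_goals omega
  have hreg := regA_eq (by omega) (by omega) hlow hhigh hmax hsmall (by omega)
  have hr := rA_eq (by omega) (by omega) hlow hhigh hmax hsmall (by omega)
  exact ⟨hreg.trans hr.symm, hr⟩
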